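/- arXiv:1009.1510 — 2 statements merged into one kernel-verified Lean document; each statement's English description precedes it below -/
import Mathlib

section
/- The Fourier transform of the Cauchy distribution with location parameter a and scale b > 0 equals e^{iaz - b|z|} for all real z. -/
/-!
In Mathlib's normalisation `𝓕 f ξ = ∫ e^{-2πixξ} f x dx`, the Cauchy density `p` with location
`x₀` and scale `γ` is the Fourier transform of `g x = e^{2πi x₀ x - 2πγ|x|}`: split the integral
at `0` into two exponential integrals `1/(2πγ ∓ 2πi(x₀ - ξ))`. Since `g` is continuous and both `g`
and `p` are integrable, Fourier inversion gives `∫ e^{2πixw} p(x) dx = g w`; evaluating at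
`w = t/2π` yields the characteristic function `e^{i t x₀ - γ|t|}`.
-/

open MeasureTheory Complex

/-- The Cauchy distribution with location `a` and scale `b`. -/
noncomputable def cauchyMeasure (a b : ℝ) : Measure ℝ :=
  volume.withDensity (fun x => ENNReal.ofReal ((1 / Real.pi) * b / ((x - a) ^ 2 + b ^ 2)))

/-- The Fourier transform of a measure on `ℝ`. -/
noncomputable def fourierTr (μ : Measure ℝ) (z : ℝ) : ℂ :=
  ∫ x, Complex.exp (Complex.I * x * z) ∂μ

open Real Set
open scoped FourierTransform NNReal
open ProbabilityTheory (cauchyPDFReal)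

section TwoSidedExponential

variable {b : ℝ} {c : ℂ}

lemma integrableOn_Iic_cexp_mul_sub_mul_abs (hc : -b < c.re) :
    IntegrableOn (fun x : ℝ => cexp (c * x - b * |x|)) (Iic 0) := by
  refine (integrableOn_exp_mul_complex_Iic (a := c + b)
    (by rw [add_re, ofReal_re]; linarith) 0).congr_fun
    (fun x (hx : x ≤ 0) => ?_) measurableSet_Iic
  rw [abs_of_nonpos hx]; push_cast; ring_nf

lemma integrableOn_Ioi_cexp_mul_sub_mul_abs (hc : c.re < b) :
    IntegrableOn (fun x : ℝ => cexp (c * x - b * |x|)) (Ioi 0) := by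
  refine (integrableOn_exp_mul_complex_Ioi (a := c - b)
    (by rw [sub_re, ofReal_re]; linarith) 0).congr_fun
    (fun x (hx : 0 < x) => ?_) measurableSet_Ioi
  rw [abs_of_pos hx]; ring_nf

lemma integrable_cexp_mul_sub_mul_abs (hc : |c.re| < b) :
    Integrable (fun x : ℝ => cexp (c * x - b * |x|)) := by
  obtain ⟨hlow, hup⟩ := abs_lt.1 hc
  rw [← integrableOn_univ, ← Iic_union_Ioi (a := (0 : ℝ))]
  exact (integrableOn_Iic_cexp_mul_sub_mul_abs hlow).union
    (integrableOn_Ioi_cexp_mul_sub_mul_abs hup)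

lemma integral_cexp_mul_sub_mul_abs (hc : |c.re| < b) :
    ∫ x : ℝ, cexp (c * x - b * |x|) = 2 * b / (b ^ 2 - c ^ 2) := by
  obtain ⟨hlow, hup⟩ := abs_lt.1 hc
  have hIic : ∫ x in Iic (0 : ℝ), cexp (c * x - b * |x|) = 1 / (b + c) := by
    rw [setIntegral_congr_fun measurableSet_Iic (g := fun x : ℝ => cexp ((c + b) * x))
      (fun x (hx : x ≤ 0) => by rw [abs_of_nonpos hx]; push_cast; ring_nf),
      integral_exp_mul_complex_Iic (by rw [add_re, ofReal_re]; linarith)]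
    simp [add_comm]
  have hIoi : ∫ x in Ioi (0 : ℝ), cexp (c * x - b * |x|) = 1 / (b - c) := by
    rw [setIntegral_congr_fun measurableSet_Ioi (g := fun x : ℝ => cexp ((c - b) * x))
      (fun x (hx : 0 < x) => by rw [abs_of_pos hx]; ring_nf),
      integral_exp_mul_complex_Ioi (by rw [sub_re, ofReal_re]; linarith)]
    rw [← neg_sub, div_neg, neg_div, neg_neg, Complex.ofReal_zero, mul_zero, Complex.exp_zero]
  have hplus : (b : ℂ) + c ≠ 0 := ne_of_apply_ne re (by rw [add_re, ofReal_re, zero_re]; linarith)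
  have hminus : (b : ℂ) - c ≠ 0 := ne_of_apply_ne re (by rw [sub_re, ofReal_re, zero_re]; linarith)
  rw [← intervalIntegral.integral_Iic_add_Ioi (integrableOn_Iic_cexp_mul_sub_mul_abs hlow)
    (integrableOn_Ioi_cexp_mul_sub_mul_abs hup), hIic, hIoi]
  have hsq : (b : ℂ) ^ 2 - c ^ 2 ≠ 0 := by rw [sq_sub_sq]; exact mul_ne_zero hplus hminus
  field_simp
  ring

end TwoSidedExponential

section CauchyDistribution

variable (x₀ : ℝ) {γ : ℝ≥0}

lemma fourier_cexp_mul_sub_mul_abs_eq_cauchyPDFReal (hγ : γ ≠ 0) (ξ : ℝ) :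
    𝓕 (fun x : ℝ => cexp (↑(2 * π * x₀) * I * x - ↑(2 * π * γ) * |x|)) ξ
      = cauchyPDFReal x₀ γ ξ := by
  have hγpos : 0 < (γ : ℝ) := NNReal.coe_pos.2 (pos_iff_ne_zero.2 hγ)
  have hc : |(↑(2 * π * (x₀ - ξ)) * I).re| < 2 * π * γ := by
    rw [mul_I_re, ofReal_im, neg_zero, abs_zero]; positivity
  have hexp : ∀ x : ℝ, cexp (↑(-2 * π * x * ξ) * I) •
        cexp (↑(2 * π * x₀) * I * x - ↑(2 * π * γ) * |x|)
      = cexp (↑(2 * π * (x₀ - ξ)) * I * x - ↑(2 * π * γ) * |x|) := by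
    intro x
    rw [smul_eq_mul, ← Complex.exp_add]
    push_cast; ring_nf
  simp_rw [Real.fourier_real_eq_integral_exp_smul, hexp, integral_cexp_mul_sub_mul_abs hc,
    ProbabilityTheory.cauchyPDFReal_def]
  have hπ : (π : ℂ) ≠ 0 := by exact_mod_cast Real.pi_ne_zero
  have hden : ((ξ : ℂ) - x₀) ^ 2 + (γ : ℂ) ^ 2 ≠ 0 := by
    exact_mod_cast (by positivity : (ξ - x₀) ^ 2 + (γ : ℝ) ^ 2 ≠ 0)
  have hsq : ((2 * π * γ : ℝ) : ℂ) ^ 2 - (↑(2 * π * (x₀ - ξ)) * I) ^ 2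
      = 4 * π ^ 2 * ((ξ - x₀) ^ 2 + (γ : ℂ) ^ 2) := by
    push_cast; ring_nf; rw [I_sq]; ring
  rw [hsq]
  push_cast
  field_simp
  ring

lemma integral_cexp_mul_cauchyPDFReal (hγ : γ ≠ 0) (t : ℝ) :
    ∫ x : ℝ, cexp (t * x * I) * cauchyPDFReal x₀ γ x = cexp (t * x₀ * I - γ * |t|) := by
  set g : ℝ → ℂ := fun x => cexp (↑(2 * π * x₀) * I * x - ↑(2 * π * γ) * |x|)
  have hγpos : 0 < (γ : ℝ) := NNReal.coe_pos.2 (pos_iff_ne_zero.2 hγ)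
  have hg_int : Integrable g := integrable_cexp_mul_sub_mul_abs (by
    rw [mul_I_re, ofReal_im, neg_zero, abs_zero]; positivity)
  have hFg : 𝓕 g = fun ξ => (cauchyPDFReal x₀ γ ξ : ℂ) :=
    funext (fourier_cexp_mul_sub_mul_abs_eq_cauchyPDFReal x₀ hγ)
  have hFg_int : Integrable (𝓕 g) := hFg ▸ (ProbabilityTheory.integrable_cauchyPDFReal x₀).ofReal
  have hinv := congrFun ((show Continuous g by fun_prop).fourierInv_fourier_eq hg_int hFg_int)
    (t / (2 * π))
  rw [Real.fourierInv_eq', hFg] at hinv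
  convert hinv using 1
  · congr 1 with x
    rw [smul_eq_mul]
    congr 2
    rw [RCLike.inner_apply, conj_trivial]
    push_cast
    field_simp
  · dsimp only [g]
    rw [abs_div, abs_of_pos (by positivity : (0 : ℝ) < 2 * π)]
    congr 1
    push_cast
    field_simp

theorem charFun_cauchyMeasure (γ : ℝ≥0) (t : ℝ) :
    charFun (ProbabilityTheory.cauchyMeasure x₀ γ) t = cexp (t * x₀ * I - γ * |t|) := by
  rcases eq_or_ne γ 0 with rfl | hγ
  · simp [mul_comm]
  rw [ProbabilityTheory.cauchyMeasure_of_scale_ne_zero x₀ hγ, charFun_apply_real,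
    integral_withDensity_eq_integral_toReal_smul (ProbabilityTheory.measurable_cauchyPDF x₀ γ)
      (ae_of_all _ fun x => ENNReal.ofReal_lt_top), ← integral_cexp_mul_cauchyPDFReal x₀ hγ t]
  congr 1 with x
  rw [ProbabilityTheory.cauchyPDF_def, ENNReal.toReal_ofReal
    (ProbabilityTheory.cauchyPDF_pos x₀ hγ x).le, Complex.real_smul, mul_comm]

end CauchyDistribution

lemma fourierTr_eq_charFun (μ : Measure ℝ) (z : ℝ) : fourierTr μ z = charFun μ z := by
  rw [fourierTr, charFun_apply_real]
  congr 1 with x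
  ring_nf

lemma cauchyMeasure_eq_probabilityTheory_cauchyMeasure (a : ℝ) {b : ℝ} (hb : 0 < b) :
    cauchyMeasure a b = ProbabilityTheory.cauchyMeasure a b.toNNReal := by
  rw [ProbabilityTheory.cauchyMeasure_of_scale_ne_zero a (by simpa using hb), cauchyMeasure]
  congr 1 with x
  rw [ProbabilityTheory.cauchyPDF_def, ProbabilityTheory.cauchyPDFReal_def,
    Real.coe_toNNReal b hb.le]
  ring_nf

/-- The Fourier transform of the Cauchy distribution equals `e^{iaz - b|z|}`. -/
theorem fourier_cauchy (a b : ℝ) (hb : 0 < b) (z : ℝ) :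
    fourierTr (cauchyMeasure a b) z =
      Complex.exp (Complex.I * a * z - b * |z|) := by
  rw [fourierTr_eq_charFun, cauchyMeasure_eq_probabilityTheory_cauchyMeasure a hb,
    charFun_cauchyMeasure, Real.coe_toNNReal b hb.le]
  ring_nf
end

section
/- If a complex sequence (mₙ)_{n≥0} with m₀ = 1 satisfies |mₙ| ≤ Rⁿ for all n, then the N-fold monotone convolution power sequence, defined recursively via mₙ(μ^{▷(N+1)}) = ∑_{k=0}^{n} ∑_{j₀+⋯+j_k=n-k} m_k · m_{j₀}(μ^{▷N})⋯m_{j_k}(μ^{▷N}) with μ^{▷1} = μ, satisfies |mₙ(μ^{▷N})| ≤ (NR)ⁿ for all n, N ≥ 1. -/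
open Finset

/-!
Writing `‖m_k‖ ≤ Rᵏ` and `‖mⱼ(σ)‖ ≤ Sʲ`, every product `m_k m_{j₀}(σ)⋯m_{j_k}(σ)` in the
`k`-th block of `mₙ(ρ ▷ σ)` has norm at most `Rᵏ Sⁿ⁻ᵏ`, and by stars and bars there are
`C(n, k)` compositions `j₀ + ⋯ + j_k = n - k`; the binomial theorem then gives
`‖mₙ(ρ ▷ σ)‖ ≤ (R + S)ⁿ`. Iterating from `S = 0` (the moments of `δ₀`) yields `(N R)ⁿ`.
-/

/-- The monotone convolution of two moment sequences:
`mₙ(ρ ▷ σ) = ∑_{k=0}^{n} ∑_{j₀+⋯+j_k = n-k} m_k(ρ) m_{j₀}(σ)⋯m_{j_k}(σ)`. -/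
noncomputable def monConv (mρ mσ : ℕ → ℂ) (n : ℕ) : ℂ :=
  ∑ k ∈ Finset.range (n + 1),
    ∑ j ∈ Finset.Nat.antidiagonalTuple (k + 1) (n - k),
      mρ k * ∏ l : Fin (k + 1), mσ (j l)

/-- `N`-fold monotone convolution power of a moment sequence (`N = 0` gives the moment
sequence of `δ₀`, so that `monPow m 1 = m`). -/
noncomputable def monPow (m : ℕ → ℂ) : ℕ → ℕ → ℂ
  | 0 => fun n => if n = 0 then 1 else 0
  | (N + 1) => monConv m (monPow m N)

theorem Finset.Nat.card_antidiagonalTuple (k n : ℕ) :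
    #(Finset.Nat.antidiagonalTuple k n) = (k + n - 1).choose n := by
  rw [card_eq_of_equiv_fintype ((Equiv.subtypeEquivRight fun _ => Nat.mem_antidiagonalTuple).trans
    (Sym.equivNatSumOfFintype (Fin k) n).symm), Sym.card_sym_eq_choose, Fintype.card_fin]

theorem Finset.Nat.card_antidiagonalTuple_succ_sub {k n : ℕ} (hk : k ≤ n) :
    #(Finset.Nat.antidiagonalTuple (k + 1) (n - k)) = n.choose k := by
  rw [Nat.card_antidiagonalTuple, show k + 1 + (n - k) - 1 = n by omega, Nat.choose_symm hk]

theorem norm_prod_le_pow_sum {ι : Type*} (s : Finset ι) {σ : ℕ → ℂ} {S : ℝ}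
    (hσ : ∀ n, ‖σ n‖ ≤ S ^ n) (j : ι → ℕ) :
    ‖∏ l ∈ s, σ (j l)‖ ≤ S ^ ∑ l ∈ s, j l := by
  rw [norm_prod, ← prod_pow_eq_pow_sum]
  exact prod_le_prod (fun _ _ => norm_nonneg _) fun l _ => hσ (j l)

theorem norm_monConv_le_add_pow {mρ mσ : ℕ → ℂ} {R S : ℝ}
    (hρ : ∀ n, ‖mρ n‖ ≤ R ^ n) (hσ : ∀ n, ‖mσ n‖ ≤ S ^ n) (n : ℕ) :
    ‖monConv mρ mσ n‖ ≤ (R + S) ^ n := by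
  have block_le : ∀ k ∈ range (n + 1),
      ‖∑ j ∈ Nat.antidiagonalTuple (k + 1) (n - k), mρ k * ∏ l, mσ (j l)‖
        ≤ R ^ k * S ^ (n - k) * n.choose k := by
    intro k hk
    have term_le : ∀ j ∈ Nat.antidiagonalTuple (k + 1) (n - k),
        ‖mρ k * ∏ l, mσ (j l)‖ ≤ R ^ k * S ^ (n - k) := by
      intro j hj
      rw [norm_mul, ← Nat.mem_antidiagonalTuple.mp hj]
      exact mul_le_mul (hρ k) (norm_prod_le_pow_sum univ hσ j) (norm_nonneg _)
        ((norm_nonneg _).trans (hρ k))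
    calc _ ≤ ∑ _j ∈ Nat.antidiagonalTuple (k + 1) (n - k), R ^ k * S ^ (n - k) :=
          norm_sum_le_of_le _ term_le
      _ = R ^ k * S ^ (n - k) * n.choose k := by
          rw [sum_const, Nat.card_antidiagonalTuple_succ_sub (Nat.lt_succ_iff.mp (mem_range.mp hk)),
            nsmul_eq_mul, mul_comm]
  calc ‖monConv mρ mσ n‖
      ≤ ∑ k ∈ range (n + 1), R ^ k * S ^ (n - k) * n.choose k :=
        (norm_sum_le _ _).trans (sum_le_sum block_le)
    _ = (R + S) ^ n := (add_pow R S n).symm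

theorem norm_monPow_le {m : ℕ → ℂ} {R : ℝ} (hm : ∀ n, ‖m n‖ ≤ R ^ n) :
    ∀ N n, ‖monPow m N n‖ ≤ ((N : ℝ) * R) ^ n
  | 0, 0 => by simp [monPow]
  | 0, n + 1 => by simp [monPow]
  | N + 1, n => by
    calc ‖monPow m (N + 1) n‖ ≤ (R + N * R) ^ n :=
          norm_monConv_le_add_pow hm (norm_monPow_le hm N) n
      _ = (((N + 1 : ℕ) : ℝ) * R) ^ n := by push_cast; ring

theorem monPow_moment_bound_general (m : ℕ → ℂ) (R : ℝ)
    (hm : ∀ n : ℕ, ‖m n‖ ≤ R ^ n) :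
    ∀ N : ℕ, 1 ≤ N → ∀ n : ℕ,
      ‖monPow m N n‖ ≤ ((N : ℝ) * R) ^ n :=
  fun N _ => norm_monPow_le hm N

/-- Lemma 3.3: if `m₀ = 1` and `|mₙ| ≤ Rⁿ` for all `n`, then the `N`-fold monotone
convolution power satisfies `|mₙ(μ^{▷N})| ≤ (N R)ⁿ` for all `n` and `N ≥ 1`. -/
theorem monPow_moment_bound (m : ℕ → ℂ) (R : ℝ) (hR : 0 ≤ R)
    (hm0 : m 0 = 1) (hm : ∀ n : ℕ, ‖m n‖ ≤ R ^ n) :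
    ∀ N : ℕ, 1 ≤ N → ∀ n : ℕ,
      ‖monPow m N n‖ ≤ ((N : ℝ) * R) ^ n :=
  monPow_moment_bound_general m R hm
end
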